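/- Every map of flows which belongs to W̄_DK and to cof(I^gl ∪ {C}) belongs to cof({C⁺, c₀⁺} ∪ J^gl ∪ I^gl_{≥1}); that is, W̄_DK ∩ cof(I^gl ∪ {C}) ⊆ cof({C⁺, c₀⁺} ∪ J^gl ∪ I^gl_{≥1}). -/

import Mathlib

open CategoryTheory

noncomputable section

/-! ### Flows: small semicategories enriched in topological spaces -/

structure DFlow : Type 1 where
  States : Type
  Path : States → States → Type
  str : ∀ α β, TopologicalSpace (Path α β)
  comp : ∀ {α β γ : States}, Path α β → Path β γ → Path α γ
  continuous_comp : ∀ α β γ, Continuous (fun p : Path α β × Path β γ => comp p.1 p.2)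
  assoc : ∀ {α β γ δ : States} (x : Path α β) (y : Path β γ) (z : Path γ δ),
    comp (comp x y) z = comp x (comp y z)

attribute [instance] DFlow.str

/-- Morphisms of flows. -/
structure FlowHom (X Y : DFlow) where
  toFun : X.States → Y.States
  map : ∀ {α β : X.States}, X.Path α β → Y.Path (toFun α) (toFun β)
  continuous_map : ∀ α β : X.States, Continuous fun p : X.Path α β => map p
  map_comp : ∀ {α β γ : X.States} (x : X.Path α β) (y : X.Path β γ),
    map (X.comp x y) = Y.comp (map x) (map y)

instance : Category DFlow where
  Hom := FlowHom
  id X := ⟨id, fun p => p, fun _ _ => continuous_id, fun _ _ => rfl⟩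
  comp f g := ⟨g.toFun ∘ f.toFun, fun p => g.map (f.map p),
    fun α β => (g.continuous_map _ _).comp (f.continuous_map _ _),
    fun x y => by simp only [f.map_comp, g.map_comp]⟩

lemma continuous_of_isEmpty {X Y : Type} [TopologicalSpace X] [TopologicalSpace Y]
    (h : IsEmpty X) (f : X → Y) : Continuous f :=
  continuous_iff_continuousAt.mpr fun x => h.elim x

/-- A set viewed as a flow with empty spaces of execution paths. -/
def DFlow.ofSet (S : Type) : DFlow where
  States := S
  Path _ _ := Empty
  str _ _ := ⊥
  comp x _ := x.elim
  continuous_comp _ _ _ := continuous_of_isEmpty (inferInstanceAs (IsEmpty (Empty × Empty))) _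
  assoc x _ _ := x.elim

/-- The empty flow. -/
def emptyFlow : DFlow := DFlow.ofSet Empty

/-- The flow `{0}` with one state and no execution path. -/
def pointFlow : DFlow := DFlow.ofSet PUnit

/-- The flow `{0, 1}` with two states and no execution path. -/
def twoFlow : DFlow := DFlow.ofSet Bool

/-- The terminal flow. -/
def terminalFlow : DFlow where
  States := PUnit
  Path _ _ := PUnit
  str _ _ := ⊥
  comp _ _ := PUnit.unit
  continuous_comp _ _ _ := continuous_const
  assoc _ _ _ := rfl

/-- The map of flows `C : ∅ → {0}`. -/
def Cmap : emptyFlow ⟶ pointFlow :=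
  ⟨fun x => x.elim, fun {α} _ _ => α.elim, fun α _ => α.elim, fun {α} _ _ _ _ => α.elim⟩

/-- The map of flows `R : {0,1} → {0}`. -/
def Rmap : twoFlow ⟶ pointFlow :=
  ⟨fun _ => PUnit.unit, fun p => p.elim, fun _ _ => @continuous_of_isEmpty _ _ (twoFlow.str _ _) (pointFlow.str _ _) (inferInstanceAs (IsEmpty Empty)) _, fun x _ => x.elim⟩

/-- The map of flows `C⁺ : {0} → {0,1}`. -/
def Cplus : pointFlow ⟶ twoFlow :=
  ⟨fun _ => false, fun p => p.elim, fun _ _ => @continuous_of_isEmpty _ _ (pointFlow.str _ _) (twoFlow.str _ _) (inferInstanceAs (IsEmpty Empty)) _, fun x _ => x.elim⟩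

/-- The canonical map from the empty flow. -/
def DFlow.fromEmpty (X : DFlow) : emptyFlow ⟶ X :=
  ⟨fun x => x.elim, fun {α} _ => α.elim, fun α _ => α.elim, fun {α} _ _ _ _ => α.elim⟩

/-- The canonical map to the terminal flow. -/
def DFlow.toTerminal (X : DFlow) : X ⟶ terminalFlow :=
  ⟨fun _ => PUnit.unit, fun _ => PUnit.unit, fun _ _ => @continuous_const _ _ _ (terminalFlow.str _ _) _, fun _ _ => rfl⟩

/-! ### Globes -/

/-- The path spaces of the globe `Glob(Z)`. -/
def GlobPath (Z : Type) : Bool → Bool → Type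
  | false, true => Z
  | _, _ => Empty

instance globPathTop (Z : Type) [TopologicalSpace Z] :
    ∀ a b, TopologicalSpace (GlobPath Z a b)
  | false, true => inferInstanceAs (TopologicalSpace Z)
  | false, false => ⊥
  | true, false => ⊥
  | true, true => ⊥

instance globPathIsEmpty (Z : Type) : ∀ (a : Bool), IsEmpty (GlobPath Z a a)
  | false => inferInstanceAs (IsEmpty Empty)
  | true => inferInstanceAs (IsEmpty Empty)

/-- The globe of a topological space. -/
def DFlow.glob (Z : Type) [TopologicalSpace Z] : DFlow where
  States := Bool
  Path := GlobPath Z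
  str := globPathTop Z
  comp {a b c} x y :=
    match a, b, c, x, y with
    | false, false, _, x, _ => x.elim
    | false, true, false, _, y => y.elim
    | false, true, true, _, y => y.elim
    | true, false, _, x, _ => x.elim
    | true, true, _, x, _ => x.elim
  continuous_comp a b c :=
    match a, b, c with
    | false, false, false => continuous_of_isEmpty ⟨fun p => p.1.elim⟩ _
    | false, false, true => continuous_of_isEmpty ⟨fun p => p.1.elim⟩ _
    | false, true, false => continuous_of_isEmpty ⟨fun p => p.2.elim⟩ _
    | false, true, true => continuous_of_isEmpty ⟨fun p => p.2.elim⟩ _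
    | true, false, false => continuous_of_isEmpty ⟨fun p => p.1.elim⟩ _
    | true, false, true => continuous_of_isEmpty ⟨fun p => p.1.elim⟩ _
    | true, true, false => continuous_of_isEmpty ⟨fun p => p.1.elim⟩ _
    | true, true, true => continuous_of_isEmpty ⟨fun p => p.1.elim⟩ _
  assoc {a b c d} x y z :=
    match a, b, c, d, x, y, z with
    | false, false, _, _, x, _, _ => x.elim
    | false, true, false, _, _, y, _ => y.elim
    | false, true, true, false, _, y, _ => y.elim
    | false, true, true, true, _, y, _ => y.elim
    | true, _, _, _, x, _, _ => x.elim

/-- The functorial action of `Glob` on a continuous map. -/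
def DFlow.globMap {Z W : Type} [TopologicalSpace Z] [TopologicalSpace W] (f : Z → W)
    (hf : Continuous f) : DFlow.glob Z ⟶ DFlow.glob W where
  toFun := id
  map {a b} x :=
    match a, b, x with
    | false, true, x => f x
    | false, false, x => x.elim
    | true, false, x => x.elim
    | true, true, x => x.elim
  continuous_map a b :=
    match a, b with
    | false, true => hf
    | false, false => @continuous_of_isEmpty _ _ ((DFlow.glob Z).str _ _) ((DFlow.glob W).str _ _) (inferInstanceAs (IsEmpty Empty)) _
    | true, false => @continuous_of_isEmpty _ _ ((DFlow.glob Z).str _ _) ((DFlow.glob W).str _ _) (inferInstanceAs (IsEmpty Empty)) _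
    | true, true => @continuous_of_isEmpty _ _ ((DFlow.glob Z).str _ _) ((DFlow.glob W).str _ _) (inferInstanceAs (IsEmpty Empty)) _
  map_comp {a b c} x y :=
    match a, b, c, x, y with
    | false, false, _, x, _ => x.elim
    | false, true, false, _, y => y.elim
    | false, true, true, _, y => y.elim
    | true, _, _, x, _ => x.elim

/-- The directed segment, the globe of a one-point space. -/
def Iseg : DFlow := DFlow.glob PUnit

/-! ### Disks and spheres -/

/-- The `n`-dimensional disk `D^n`. -/
def gDisk (n : ℕ) : Type := (Metric.closedBall (0 : EuclideanSpace ℝ (Fin n)) 1 : Set _)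

/-- The sphere `S^{n-1}`, boundary of the `n`-dimensional disk. -/
def gSphere (n : ℕ) : Type := (Metric.sphere (0 : EuclideanSpace ℝ (Fin n)) 1 : Set _)

instance (n : ℕ) : TopologicalSpace (gDisk n) :=
  inferInstanceAs (TopologicalSpace (Metric.closedBall (0 : EuclideanSpace ℝ (Fin n)) 1))

instance (n : ℕ) : TopologicalSpace (gSphere n) :=
  inferInstanceAs (TopologicalSpace (Metric.sphere (0 : EuclideanSpace ℝ (Fin n)) 1))

/-- The inclusion `S^{n-1} ⊆ D^n`. -/
def sphereIncl (n : ℕ) : gSphere n → gDisk n :=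
  fun x => ⟨x.1, Metric.sphere_subset_closedBall x.2⟩

lemma continuous_sphereIncl (n : ℕ) : Continuous (sphereIncl n) :=
  Continuous.subtype_mk continuous_subtype_val _

/-- The generating cofibration `c_n : Glob(S^{n-1}) → Glob(D^n)`. -/
def cFlow (n : ℕ) : DFlow.glob (gSphere n) ⟶ DFlow.glob (gDisk n) :=
  DFlow.globMap (sphereIncl n) (continuous_sphereIncl n)

/-- `{0}` as a subspace of `ℝ`. -/
def zeroSpace : Type := ({(0 : ℝ)} : Set ℝ)

instance : TopologicalSpace zeroSpace := inferInstanceAs (TopologicalSpace ({(0:ℝ)} : Set ℝ))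

/-- The inclusion `D^n × {0} → D^n × [0,1]`. -/
def cylIncl (n : ℕ) : gDisk n × zeroSpace → gDisk n × unitInterval :=
  fun p => (p.1, ⟨p.2.1, by
    rcases p.2 with ⟨x, hx⟩
    simp only [Set.mem_singleton_iff] at hx
    subst hx
    exact unitInterval.zero_mem⟩)

lemma continuous_cylIncl (n : ℕ) : Continuous (cylIncl n) :=
  continuous_fst.prodMk (Continuous.subtype_mk (continuous_subtype_val.comp continuous_snd) _)

/-- The generating trivial cofibration `Glob(D^n × {0}) → Glob(D^n × [0,1])`. -/
def jFlow (n : ℕ) : DFlow.glob (gDisk n × zeroSpace) ⟶ DFlow.glob (gDisk n × unitInterval) :=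
  DFlow.globMap (cylIncl n) (continuous_cylIncl n)

/-! ### Generating sets of maps, as morphism properties -/

/-- The set `I^gl = {c_n : Glob(S^{n-1}) → Glob(D^n) | n ≥ 0}`. -/
def Igl : MorphismProperty DFlow := fun X Y f =>
  ∃ n : ℕ, X = DFlow.glob (gSphere n) ∧ Y = DFlow.glob (gDisk n) ∧ HEq f (cFlow n)

/-- The set `I^gl_{≥1} = {c_n | n ≥ 1}`. -/
def IglGeOne : MorphismProperty DFlow := fun X Y f =>
  ∃ n : ℕ, 1 ≤ n ∧ X = DFlow.glob (gSphere n) ∧ Y = DFlow.glob (gDisk n) ∧ HEq f (cFlow n)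

/-- The set `J^gl`. -/
def Jgl : MorphismProperty DFlow := fun X Y f =>
  ∃ n : ℕ, X = DFlow.glob (gDisk n × zeroSpace) ∧ Y = DFlow.glob (gDisk n × unitInterval) ∧
    HEq f (jFlow n)

/-- The singleton `{C}`. -/
def Cprop : MorphismProperty DFlow := fun X Y f =>
  X = emptyFlow ∧ Y = pointFlow ∧ HEq f Cmap

/-- The singleton `{R}`. -/
def Rprop : MorphismProperty DFlow := fun X Y f =>
  X = twoFlow ∧ Y = pointFlow ∧ HEq f Rmap

/-- The set `I^gl ∪ {C}`. -/
def IglC : MorphismProperty DFlow := fun _ _ f => Igl f ∨ Cprop f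

/-- The set `I^gl ∪ {C, R}`, generating cofibrations of the q-model structure. -/
def IglCR : MorphismProperty DFlow := fun _ _ f => Igl f ∨ Cprop f ∨ Rprop f

/-! ### Lifting properties, cofibration and injectivity classes -/

/-- `rlpClass S` is `inj(S)`: maps with the RLP with respect to every map of `S`. -/
def rlpClass {M : Type _} [Category M] (S : MorphismProperty M) : MorphismProperty M :=
  fun _ _ p => ∀ {A B : M} (i : A ⟶ B), S i → HasLiftingProperty i p

/-- `llpClass S`: maps with the LLP with respect to every map of `S`. -/
def llpClass {M : Type _} [Category M] (S : MorphismProperty M) : MorphismProperty M :=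
  fun _ _ i => ∀ {A B : M} (p : A ⟶ B), S p → HasLiftingProperty i p

/-- `cofClass S` is `cof(S) = llp(inj(S))`. -/
def cofClass {M : Type _} [Category M] (S : MorphismProperty M) : MorphismProperty M :=
  llpClass (rlpClass S)

/-! ### Model structures -/

/-- A model structure on a category, specified by its weak equivalences,
cofibrations and fibrations. -/
structure ModelStructure (M : Type _) [Category M] where
  W : MorphismProperty M
  C : MorphismProperty M
  F : MorphismProperty M
  w_comp : ∀ {X Y Z : M} (f : X ⟶ Y) (g : Y ⟶ Z), W f → W g → W (f ≫ g)
  w_cancel_left : ∀ {X Y Z : M} (f : X ⟶ Y) (g : Y ⟶ Z), W f → W (f ≫ g) → W g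
  w_cancel_right : ∀ {X Y Z : M} (f : X ⟶ Y) (g : Y ⟶ Z), W g → W (f ≫ g) → W f
  w_retract : ∀ {X Y X' Y' : M} (f : X ⟶ Y) (g : X' ⟶ Y') (iX : X ⟶ X') (rX : X' ⟶ X)
    (iY : Y ⟶ Y') (rY : Y' ⟶ Y), iX ≫ rX = 𝟙 X → iY ≫ rY = 𝟙 Y →
    iX ≫ g = f ≫ iY → g ≫ rY = rX ≫ f → W g → W f
  cof_eq : C = llpClass (fun _ _ p => F p ∧ W p)
  fib_eq : F = rlpClass (fun _ _ i => C i ∧ W i)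
  factor_triv_cof : ∀ {X Y : M} (f : X ⟶ Y),
    ∃ (Z : M) (i : X ⟶ Z) (p : Z ⟶ Y), C i ∧ W i ∧ F p ∧ i ≫ p = f
  factor_triv_fib : ∀ {X Y : M} (f : X ⟶ Y),
    ∃ (Z : M) (i : X ⟶ Z) (p : Z ⟶ Y), C i ∧ F p ∧ W p ∧ i ≫ p = f

/-! ### The class of weak equivalences `W̄_DK` -/

/-- A flow "is a set": it has no execution path. -/
def DFlow.IsSetFlow (X : DFlow) : Prop := ∀ α β : X.States, IsEmpty (X.Path α β)

/-- A flow has at least one execution path. -/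
def DFlow.HasExecPath (X : DFlow) : Prop := ∃ α β : X.States, Nonempty (X.Path α β)

/-- The class `W̄_DK` of maps of flows. -/
def WbarDK : MorphismProperty DFlow := fun X Y _ =>
  (IsEmpty X.States ∧ IsEmpty Y.States) ∨
  (Nonempty X.States ∧ Nonempty Y.States ∧ X.IsSetFlow ∧ Y.IsSetFlow) ∨
  (X.HasExecPath ∧ Y.HasExecPath)

/-! ### Binary coproducts of flows -/

/-- Path spaces of the coproduct of two flows. -/
def SumPath (X Y : DFlow) : X.States ⊕ Y.States → X.States ⊕ Y.States → Type
  | .inl a, .inl b => X.Path a b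
  | .inr a, .inr b => Y.Path a b
  | _, _ => Empty

instance sumPathTop (X Y : DFlow) : ∀ a b, TopologicalSpace (SumPath X Y a b)
  | .inl a, .inl b => inferInstanceAs (TopologicalSpace (X.Path a b))
  | .inr a, .inr b => inferInstanceAs (TopologicalSpace (Y.Path a b))
  | .inl _, .inr _ => ⊥
  | .inr _, .inl _ => ⊥

/-- The coproduct of two flows. -/
def DFlow.sum (X Y : DFlow) : DFlow where
  States := X.States ⊕ Y.States
  Path := SumPath X Y
  str := sumPathTop X Y
  comp {a b c} x y :=
    match a, b, c, x, y with
    | .inl _, .inl _, .inl _, x, y => X.comp x y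
    | .inr _, .inr _, .inr _, x, y => Y.comp x y
    | .inl _, .inl _, .inr _, _, y => y.elim
    | .inl _, .inr _, _, x, _ => x.elim
    | .inr _, .inl _, _, x, _ => x.elim
    | .inr _, .inr _, .inl _, _, y => y.elim
  continuous_comp a b c :=
    match a, b, c with
    | .inl _, .inl _, .inl _ => X.continuous_comp _ _ _
    | .inr _, .inr _, .inr _ => Y.continuous_comp _ _ _
    | .inl _, .inl _, .inr _ => continuous_of_isEmpty ⟨fun p => p.2.elim⟩ _
    | .inl _, .inr _, _ => continuous_of_isEmpty ⟨fun p => p.1.elim⟩ _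
    | .inr _, .inl _, _ => continuous_of_isEmpty ⟨fun p => p.1.elim⟩ _
    | .inr _, .inr _, .inl _ => continuous_of_isEmpty ⟨fun p => p.2.elim⟩ _
  assoc {a b c d} x y z :=
    match a, b, c, d, x, y, z with
    | .inl _, .inl _, .inl _, .inl _, x, y, z => X.assoc x y z
    | .inr _, .inr _, .inr _, .inr _, x, y, z => Y.assoc x y z
    | .inl _, .inl _, .inl _, .inr _, _, _, z => z.elim
    | .inl _, .inl _, .inr _, _, _, y, _ => y.elim
    | .inl _, .inr _, _, _, x, _, _ => x.elim
    | .inr _, .inl _, _, _, x, _, _ => x.elim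
    | .inr _, .inr _, .inl _, _, _, y, _ => y.elim
    | .inr _, .inr _, .inr _, .inl _, _, _, z => z.elim

/-- The coproduct of two maps of flows. -/
def DFlow.sumMap {X X' Y Y' : DFlow} (f : X ⟶ X') (g : Y ⟶ Y') : X.sum Y ⟶ X'.sum Y' where
  toFun := Sum.map f.toFun g.toFun
  map {a b} x :=
    match a, b, x with
    | .inl _, .inl _, x => f.map x
    | .inr _, .inr _, x => g.map x
    | .inl _, .inr _, x => x.elim
    | .inr _, .inl _, x => x.elim
  continuous_map a b :=
    match a, b with
    | .inl _, .inl _ => f.continuous_map _ _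
    | .inr _, .inr _ => g.continuous_map _ _
    | .inl _, .inr _ => @continuous_of_isEmpty _ _ ((X.sum Y).str _ _) ((X'.sum Y').str _ _) (inferInstanceAs (IsEmpty Empty)) _
    | .inr _, .inl _ => @continuous_of_isEmpty _ _ ((X.sum Y).str _ _) ((X'.sum Y').str _ _) (inferInstanceAs (IsEmpty Empty)) _
  map_comp {a b c} x y :=
    match a, b, c, x, y with
    | .inl _, .inl _, .inl _, x, y => f.map_comp x y
    | .inr _, .inr _, .inr _, x, y => g.map_comp x y
    | .inl _, .inl _, .inr _, _, y => y.elim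
    | .inl _, .inr _, _, x, _ => x.elim
    | .inr _, .inl _, _, x, _ => x.elim
    | .inr _, .inr _, .inl _, _, y => y.elim

/-- The map `c₀⁺ = id_{I⃗} ⊔ c₀ : I⃗ ⊔ Glob(S^{-1}) → I⃗ ⊔ Glob(D⁰)`. -/
def cZeroPlus : Iseg.sum (DFlow.glob (gSphere 0)) ⟶ Iseg.sum (DFlow.glob (gDisk 0)) :=
  DFlow.sumMap (𝟙 Iseg) (cFlow 0)

/-- The singleton `{C⁺}`. -/
def CplusProp : MorphismProperty DFlow := fun X Y f =>
  X = pointFlow ∧ Y = twoFlow ∧ HEq f Cplus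

/-- The singleton `{c₀⁺}`. -/
def cZeroPlusProp : MorphismProperty DFlow := fun X Y f =>
  X = Iseg.sum (DFlow.glob (gSphere 0)) ∧ Y = Iseg.sum (DFlow.glob (gDisk 0)) ∧ HEq f cZeroPlus

/-- The set `{C⁺, c₀⁺} ∪ J^gl ∪ I^gl_{≥1}`. -/
def TrivCofGen : MorphismProperty DFlow := fun _ _ f =>
  CplusProp f ∨ cZeroPlusProp f ∨ Jgl f ∨ IglGeOne f
/-!
Let `p` have the RLP with respect to `{C⁺, c₀⁺} ∪ J^gl ∪ I^gl_{≥1}`. If `Y` has no state there is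
nothing to lift. If `X` and `Y` are nonempty sets, lifting `f` against the chaotic flow on the
states of `X` shows that `f` is injective on states, and `C⁺` makes `p` surjective on states, so a
lift can be chosen on states. If `X` has an execution path, so does the source of `p` in any
lifting problem for `f`; then `C⁺` gives the RLP with respect to `C`, and `c₀⁺ = id_{I⃗} ⊔ c₀`,
with that path on the summand `I⃗`, gives it with respect to `c₀`. So `p ∈ inj(I^gl ∪ {C})`, and
`f ∈ cof(I^gl ∪ {C})` lifts against it.
-/

lemma FlowHom.ext_heq {X Y : DFlow} {f g : X ⟶ Y} (h_toFun : f.toFun = g.toFun)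
    (h_map : ∀ (α β : X.States) (p : X.Path α β), HEq (f.map p) (g.map p)) : f = g := by
  obtain ⟨f₁, f₂, _, _⟩ := f
  obtain ⟨g₁, g₂, _, _⟩ := g
  dsimp only at h_toFun h_map
  subst h_toFun
  obtain rfl : @f₂ = @g₂ := funext fun α => funext fun β => funext fun p => eq_of_heq (h_map α β p)
  rfl

lemma FlowHom.toFun_comp {X Y Z : DFlow} (f : X ⟶ Y) (g : Y ⟶ Z) :
    (f ≫ g).toFun = g.toFun ∘ f.toFun :=
  rfl

lemma DFlow.hom_ext_of_isEmpty_states {X Y : DFlow} (hX : IsEmpty X.States) (f g : X ⟶ Y) :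
    f = g :=
  FlowHom.ext_heq (funext hX.elim) fun α _ _ => (hX.false α).elim

lemma DFlow.toTerminal_unique {X : DFlow} (f g : X ⟶ terminalFlow) : f = g :=
  FlowHom.ext_heq (funext fun _ => rfl) fun _ _ _ => HEq.rfl

namespace DFlow.IsSetFlow

def hom {X : DFlow} (hX : X.IsSetFlow) (Z : DFlow) (g : X.States → Z.States) : X ⟶ Z where
  toFun := g
  map p := (hX _ _).elim p
  continuous_map α β := continuous_of_isEmpty (hX α β) _
  map_comp p _ := (hX _ _).elim p

lemma hom_ext {X : DFlow} (hX : X.IsSetFlow) {Z : DFlow} {f g : X ⟶ Z} (h : f.toFun = g.toFun) :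
    f = g :=
  FlowHom.ext_heq h fun α β p => (hX α β).elim p

lemma of_hom {X : DFlow} (hX : X.IsSetFlow) {W : DFlow} (f : W ⟶ X) : W.IsSetFlow :=
  fun _ _ => ⟨fun p => (hX _ _).elim (f.map p)⟩

end DFlow.IsSetFlow

lemma DFlow.isSetFlow_ofSet (S : Type) : (DFlow.ofSet S).IsSetFlow :=
  fun _ _ => inferInstanceAs (IsEmpty Empty)

lemma hasLiftingProperty_of_isEmpty_states {X Y A B : DFlow} (i : X ⟶ Y) (p : A ⟶ B)
    (hY : IsEmpty Y.States) : HasLiftingProperty i p where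
  sq_hasLift {_ _} _ :=
    have hX : IsEmpty X.States := ⟨fun x => hY.elim (i.toFun x)⟩
    ⟨⟨⟨⟨hY.elim, fun {α} _ => hY.elim α, fun α _ => hY.elim α, fun {α} _ _ => hY.elim α⟩,
      DFlow.hom_ext_of_isEmpty_states hX _ _, DFlow.hom_ext_of_isEmpty_states hY _ _⟩⟩⟩

lemma hasLiftingProperty_of_isSetFlow {X Y A B : DFlow} (i : X ⟶ Y) (p : A ⟶ B)
    (hY : Y.IsSetFlow) (hi : Function.Injective i.toFun) (hp : Function.Surjective p.toFun) :
    HasLiftingProperty i p where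
  sq_hasLift {top bot} sq := by
    have hsq (x : X.States) : p.toFun (top.toFun x) = bot.toFun (i.toFun x) :=
      congrFun (congrArg FlowHom.toFun sq.w) x
    let l := hY.hom A (Function.extend i.toFun top.toFun (Function.surjInv hp ∘ bot.toFun))
    refine ⟨⟨⟨l, (hY.of_hom i).hom_ext (funext (hi.extend_apply _ _)), hY.hom_ext (funext ?_)⟩⟩⟩
    intro y
    by_cases hy : ∃ x, i.toFun x = y
    · obtain ⟨x, rfl⟩ := hy
      simp only [FlowHom.toFun_comp, Function.comp_apply, l, DFlow.IsSetFlow.hom,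
        hi.extend_apply, hsq]
    · simp only [FlowHom.toFun_comp, Function.comp_apply, l, DFlow.IsSetFlow.hom,
        Function.extend_apply' _ _ _ hy, Function.surjInv_eq]

lemma surjective_of_hasLiftingProperty_Cplus {A B : DFlow} (p : A ⟶ B)
    (hp : HasLiftingProperty Cplus p) (a : A.States) : Function.Surjective p.toFun := by
  intro b
  let top := (DFlow.isSetFlow_ofSet PUnit).hom A fun _ => a
  let bot := (DFlow.isSetFlow_ofSet Bool).hom B fun t => bif t then b else p.toFun a
  have sq : CommSq top Cplus p bot := ⟨(DFlow.isSetFlow_ofSet PUnit).hom_ext rfl⟩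
  obtain ⟨⟨lift⟩⟩ := hp.sq_hasLift sq
  exact ⟨lift.l.toFun true, congrFun (congrArg FlowHom.toFun lift.fac_right) true⟩

def chaoticFlow (S : Type) : DFlow where
  States := S
  Path _ _ := PUnit
  str _ _ := ⊥
  comp _ _ := PUnit.unit
  continuous_comp _ _ _ := continuous_const
  assoc _ _ _ := rfl

def chaoticFlow.lift {V : DFlow} {S : Type} (g : V.States → S) : V ⟶ chaoticFlow S :=
  ⟨g, fun _ => PUnit.unit, fun _ _ => @continuous_const _ _ _ ((chaoticFlow S).str _ _) _,
    fun _ _ => rfl⟩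

lemma chaoticFlow.hom_ext {V : DFlow} {S : Type} {f g : V ⟶ chaoticFlow S}
    (h : f.toFun = g.toFun) : f = g :=
  FlowHom.ext_heq h fun _ _ _ => HEq.rfl

lemma hasLiftingProperty_toTerminal_chaoticFlow {S : Type} [Nonempty S] {U V : DFlow}
    (i : U ⟶ V) (hi : Function.Injective i.toFun) :
    HasLiftingProperty i (chaoticFlow S).toTerminal where
  sq_hasLift {top _} _ :=
    let default : V.States → S := fun _ => Classical.arbitrary S
    ⟨⟨⟨chaoticFlow.lift (Function.extend i.toFun top.toFun default),
      chaoticFlow.hom_ext (funext (hi.extend_apply top.toFun default)),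
      DFlow.toTerminal_unique _ _⟩⟩⟩

lemma IglC.injective {U V : DFlow} {i : U ⟶ V} (hi : IglC i) : Function.Injective i.toFun := by
  rcases hi with ⟨n, rfl, rfl, hi⟩ | ⟨rfl, rfl, hi⟩
  · obtain rfl := eq_of_heq hi
    exact Function.injective_id
  · exact fun x => x.elim

lemma injective_toFun_of_cofClass_IglC {X Y : DFlow} {f : X ⟶ Y} (hf : cofClass IglC f)
    [Nonempty X.States] : Function.Injective f.toFun := by
  have := hf _ fun i hi => hasLiftingProperty_toTerminal_chaoticFlow (S := X.States) i hi.injective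
  have sq : CommSq (chaoticFlow.lift id) f (chaoticFlow X.States).toTerminal Y.toTerminal :=
    ⟨DFlow.toTerminal_unique _ _⟩
  exact Function.LeftInverse.injective (g := sq.lift.toFun)
    (congrFun (congrArg FlowHom.toFun sq.fac_left))

def DFlow.inr (X Y : DFlow) : Y ⟶ X.sum Y where
  toFun := .inr
  map p := p
  continuous_map _ _ := continuous_id
  map_comp _ _ := rfl

def DFlow.sumDesc {X Y Z : DFlow} (f : X ⟶ Z) (g : Y ⟶ Z) : X.sum Y ⟶ Z where
  toFun := Sum.elim f.toFun g.toFun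
  map {a b} p :=
    match a, b, p with
    | .inl _, .inl _, p => f.map p
    | .inr _, .inr _, p => g.map p
    | .inl _, .inr _, p => p.elim
    | .inr _, .inl _, p => p.elim
  continuous_map a b :=
    match a, b with
    | .inl _, .inl _ => f.continuous_map _ _
    | .inr _, .inr _ => g.continuous_map _ _
    | .inl _, .inr _ => @continuous_of_isEmpty _ _ ((X.sum Y).str _ _) (Z.str _ _)
        (inferInstanceAs (IsEmpty Empty)) _
    | .inr _, .inl _ => @continuous_of_isEmpty _ _ ((X.sum Y).str _ _) (Z.str _ _)
        (inferInstanceAs (IsEmpty Empty)) _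
  map_comp {a b c} p q :=
    match a, b, c, p, q with
    | .inl _, .inl _, .inl _, p, q => f.map_comp p q
    | .inr _, .inr _, .inr _, p, q => g.map_comp p q
    | .inl _, .inl _, .inr _, _, q => q.elim
    | .inl _, .inr _, _, p, _ => p.elim
    | .inr _, .inl _, _, p, _ => p.elim
    | .inr _, .inr _, .inl _, _, q => q.elim

lemma DFlow.inr_sumDesc {X Y Z : DFlow} (f : X ⟶ Z) (g : Y ⟶ Z) :
    DFlow.inr X Y ≫ DFlow.sumDesc f g = g :=
  FlowHom.ext_heq rfl fun _ _ _ => HEq.rfl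

lemma DFlow.inr_sumMap {X X' Y Y' : DFlow} (f : X ⟶ X') (g : Y ⟶ Y') :
    DFlow.inr X Y ≫ DFlow.sumMap f g = g ≫ DFlow.inr X' Y' :=
  FlowHom.ext_heq rfl fun _ _ _ => HEq.rfl

lemma DFlow.sumMap_sumDesc {X X' Y Y' Z : DFlow} (f : X ⟶ X') (g : Y ⟶ Y') (u : X' ⟶ Z)
    (v : Y' ⟶ Z) : DFlow.sumMap f g ≫ DFlow.sumDesc u v = DFlow.sumDesc (f ≫ u) (g ≫ v) := by
  refine FlowHom.ext_heq (funext fun a => ?_) fun a b p => ?_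
  · cases a <;> rfl
  · cases a <;> cases b
    exacts [HEq.rfl, p.elim, p.elim, HEq.rfl]

lemma DFlow.sumDesc_comp {X Y Z W : DFlow} (f : X ⟶ Z) (g : Y ⟶ Z) (h : Z ⟶ W) :
    DFlow.sumDesc f g ≫ h = DFlow.sumDesc (f ≫ h) (g ≫ h) := by
  refine FlowHom.ext_heq (funext fun a => ?_) fun a b p => ?_
  · cases a <;> rfl
  · cases a <;> cases b
    exacts [HEq.rfl, p.elim, p.elim, HEq.rfl]

/-- To solve a lifting problem of `i` against `p`, extend it along `w` on the summand `W`. -/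
lemma hasLiftingProperty_of_sumMap_id {W U V A B : DFlow} {i : U ⟶ V} {p : A ⟶ B}
    (hp : HasLiftingProperty (DFlow.sumMap (𝟙 W) i) p) (w : W ⟶ A) : HasLiftingProperty i p where
  sq_hasLift {top bot} sq := by
    have sq' : CommSq (DFlow.sumDesc w top) (DFlow.sumMap (𝟙 W) i) p
        (DFlow.sumDesc (w ≫ p) bot) :=
      ⟨by rw [DFlow.sumDesc_comp, DFlow.sumMap_sumDesc, Category.id_comp, sq.w]⟩
    obtain ⟨⟨lift⟩⟩ := hp.sq_hasLift sq'
    refine ⟨⟨⟨DFlow.inr W V ≫ lift.l, ?_, ?_⟩⟩⟩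
    · rw [← Category.assoc, ← DFlow.inr_sumMap (𝟙 W), Category.assoc, lift.fac_left,
        DFlow.inr_sumDesc]
    · rw [Category.assoc, lift.fac_right, DFlow.inr_sumDesc]

def Iseg.ofPath {A : DFlow} {α β : A.States} (γ : A.Path α β) : Iseg ⟶ A where
  toFun t := bif t then β else α
  map {a b} p :=
    match a, b, p with
    | false, true, _ => γ
    | false, false, p => p.elim
    | true, false, p => p.elim
    | true, true, p => p.elim
  continuous_map a b :=
    match a, b with
    | false, true => @continuous_const _ _ (Iseg.str _ _) _ _
    | false, false => @continuous_of_isEmpty _ _ (Iseg.str _ _) (A.str _ _)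
        (inferInstanceAs (IsEmpty Empty)) _
    | true, false => @continuous_of_isEmpty _ _ (Iseg.str _ _) (A.str _ _)
        (inferInstanceAs (IsEmpty Empty)) _
    | true, true => @continuous_of_isEmpty _ _ (Iseg.str _ _) (A.str _ _)
        (inferInstanceAs (IsEmpty Empty)) _
  map_comp {a b c} p q :=
    match a, b, c, p, q with
    | false, false, _, p, _ => p.elim
    | false, true, false, _, q => q.elim
    | false, true, true, _, q => q.elim
    | true, _, _, p, _ => p.elim

lemma rlpClass_IglC_of_rlpClass_TrivCofGen {A B : DFlow} {p : A ⟶ B}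
    (hp : rlpClass TrivCofGen p) {α β : A.States} (γ : A.Path α β) : rlpClass IglC p := by
  rintro U V i (⟨_ | n, rfl, rfl, hi⟩ | ⟨rfl, rfl, hi⟩) <;> obtain rfl := eq_of_heq hi
  · exact hasLiftingProperty_of_sumMap_id
      (hp cZeroPlus (Or.inr (Or.inl ⟨rfl, rfl, HEq.rfl⟩))) (Iseg.ofPath γ)
  · exact hp (cFlow (n + 1)) (Or.inr (Or.inr (Or.inr ⟨n + 1, n.succ_pos, rfl, rfl, HEq.rfl⟩)))
  · exact hasLiftingProperty_of_isSetFlow Cmap p (DFlow.isSetFlow_ofSet PUnit) (fun x => x.elim)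
      (surjective_of_hasLiftingProperty_Cplus p (hp Cplus (Or.inl ⟨rfl, rfl, HEq.rfl⟩)) α)

/-- every map of flows which belongs to `W̄_DK` and to
`cof(I^gl ∪ {C})` belongs to `cof({C⁺, c₀⁺} ∪ J^gl ∪ I^gl_{≥1})`:
`W̄_DK ∩ cof(I^gl ∪ {C}) ⊆ cof({C⁺, c₀⁺} ∪ J^gl ∪ I^gl_{≥1})`. -/
theorem Wbar_inter_cof_subset_cof {X Y : DFlow} (f : X ⟶ Y)
    (hw : WbarDK f) (hc : cofClass IglC f) : cofClass TrivCofGen f := by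
  intro A B p hp
  rcases hw with ⟨-, hY⟩ | ⟨hX, -, -, hY⟩ | ⟨⟨α, β, ⟨γ⟩⟩, -⟩
  · exact hasLiftingProperty_of_isEmpty_states f p hY
  · have := hX
    refine ⟨fun {top _} sq => ?_⟩
    have hp_surj := surjective_of_hasLiftingProperty_Cplus p
      (hp Cplus (Or.inl ⟨rfl, rfl, HEq.rfl⟩)) (top.toFun hX.some)
    exact (hasLiftingProperty_of_isSetFlow f p hY (injective_toFun_of_cofClass_IglC hc)
      hp_surj).sq_hasLift sq
  · refine ⟨fun {top _} sq => ?_⟩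
    exact (hc p (rlpClass_IglC_of_rlpClass_TrivCofGen hp (top.map γ))).sq_hasLift sq
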